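/- arXiv:2509.11978 — 9 statements merged into one kernel-verified Lean document; each statement's English description precedes it below -/
import Mathlib

section
/- Let G be a finite group, p a prime, N a nontrivial normal p-subgroup of G, and P a Sylow p-subgroup of G. Then the following are equivalent: (a) (G,N) is a Camina pair, p divides |G:N|, G/N is not a p-group, and P is normal in G; (b) P is a proper normal subgroup of G, (P,N) is a Camina pair, and G has a Hall p-complement H such that NH is a Frobenius group with Frobenius kernel N. -/
open Subgroup Pointwise

section Helpers

variable {G : Type*} [Group G] {p : ℕ}

lemma aux_mem_centralizer_iff {M : Type*} [Group M] {x c : M} :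
    c ∈ Subgroup.centralizer {x} ↔ x * c = c * x := by
  rw [Subgroup.mem_centralizer_iff]
  constructor
  · intro h; exact h x (Set.mem_singleton x)
  · intro h g hg; rw [Set.mem_singleton_iff] at hg; subst hg; exact h

lemma aux_eq_of_le_card [Fintype G] {H K : Subgroup G} (h : H ≤ K)
    (hc : Nat.card ↥K ≤ Nat.card ↥H) : H = K := by
  refine SetLike.coe_injective (Set.eq_of_subset_of_ncard_le h ?_ (Set.toFinite _))
  rw [← Nat.card_coe_set_eq, ← Nat.card_coe_set_eq]
  exact hc

lemma aux_orderOf_dvd_ppow {N : Subgroup G} (hNp : IsPGroup p ↥N) {m : G} (hm : m ∈ N) :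
    ∃ j, orderOf m ∣ p ^ j := by
  obtain ⟨j, hj⟩ := hNp ⟨m, hm⟩
  refine ⟨j, orderOf_dvd_of_pow_eq_one ?_⟩
  have := congrArg (Subgroup.subtype N) hj
  simpa using this

lemma aux_notMem_of_not_dvd [Fact p.Prime] {N : Subgroup G} (hNp : IsPGroup p ↥N) {s : G}
    (hs1 : s ≠ 1) (hsp : ¬ p ∣ orderOf s) : s ∉ N := by
  intro hmem
  obtain ⟨j, hdvd⟩ := aux_orderOf_dvd_ppow hNp hmem
  obtain ⟨i, _, hi⟩ := (Nat.dvd_prime_pow Fact.out).mp hdvd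
  rcases Nat.eq_zero_or_pos i with h0 | h0
  · rw [h0, pow_zero] at hi
    exact hs1 (orderOf_eq_one_iff.mp hi)
  · exact hsp (hi ▸ dvd_pow_self p h0.ne')

lemma aux_order_trick [Fintype G] [Fact p.Prime] {N : Subgroup G} (hNp : IsPGroup p ↥N)
    (hcam : ∀ x ∉ N, ∀ n ∈ N, IsConj x (x * n)) {s m : G} (hm : m ∈ N)
    (hcomm : Commute s m) (hsp : ¬ p ∣ orderOf s) (hsN : s ∉ N) : m = 1 := by
  obtain ⟨j, hdvd⟩ := aux_orderOf_dvd_ppow hNp hm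
  have hcop : Nat.Coprime (orderOf s) (orderOf m) := by
    refine Nat.Coprime.coprime_dvd_right hdvd ?_
    exact Nat.Coprime.pow_right _ (((Fact.out : p.Prime).coprime_iff_not_dvd.mpr hsp).symm)
  have horder : orderOf (s * m) = orderOf s * orderOf m :=
    hcomm.orderOf_mul_eq_mul_orderOf_of_coprime hcop
  obtain ⟨c, hc⟩ := isConj_iff.mp (hcam s hsN m hm)
  have hsemi : SemiconjBy c s (s * m) := by
    unfold SemiconjBy
    rw [← hc]; group
  have heq : orderOf s = orderOf (s * m) := SemiconjBy.orderOf_eq c hsemi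
  rw [horder] at heq
  have hpos : 0 < orderOf s := orderOf_pos s
  have : orderOf m = 1 := by
    nlinarith [Nat.le_of_eq heq, orderOf_pos m]
  exact orderOf_eq_one_iff.mp this

lemma aux_ppow_mem_sylow [Fintype G] [Fact p.Prime] (P : Sylow p G)
    (hPn : (P : Subgroup G).Normal) {x : G} (hx : ∃ n, orderOf x = p ^ n) :
    x ∈ (P : Subgroup G) := by
  obtain ⟨n, hn⟩ := hx
  have hzp : IsPGroup p ↥(Subgroup.zpowers x) :=
    IsPGroup.of_card (by rw [Nat.card_zpowers, hn])
  obtain ⟨Q, hQ⟩ := hzp.exists_le_sylow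
  haveI := Sylow.unique_of_normal P hPn
  have : Q = P := Subsingleton.elim Q P
  subst this
  exact hQ (Subgroup.mem_zpowers x)

lemma aux_exists_prime_order [Fintype G] {x : G} [Fact p.Prime]
    (hx : ¬ ∃ n, orderOf x = p ^ n) :
    ∃ q : ℕ, q.Prime ∧ q ≠ p ∧ ∃ k : ℕ, orderOf (x ^ k) = q := by
  have hd0 : orderOf x ≠ 0 := (orderOf_pos x).ne'
  have hr1 : ordCompl[p] (orderOf x) ≠ 1 := by
    intro h
    refine hx ⟨(orderOf x).factorization p, ?_⟩
    conv_lhs => rw [← Nat.ordProj_mul_ordCompl_eq_self (orderOf x) p]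
    rw [h, mul_one]
  set r := ordCompl[p] (orderOf x) with hrdef
  have hq : r.minFac.Prime := Nat.minFac_prime hr1
  have hqd : r.minFac ∣ orderOf x := (Nat.minFac_dvd r).trans (Nat.ordCompl_dvd (orderOf x) p)
  have hqp : r.minFac ≠ p := by
    intro h
    have hdr : r.minFac ∣ r := Nat.minFac_dvd r
    rw [h] at hdr
    exact Nat.not_dvd_ordCompl (Fact.out : p.Prime) hd0 hdr
  refine ⟨r.minFac, hq, hqp, orderOf x / r.minFac, ?_⟩
  have hdvd : orderOf x / r.minFac ∣ orderOf x := ⟨r.minFac, (Nat.div_mul_cancel hqd).symm⟩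
  rw [orderOf_pow, Nat.gcd_eq_right hdvd, Nat.div_div_self hqd hd0]

open Subgroup Pointwise

variable {G : Type*} [Group G]

lemma aux_conj_eq {x a b c : G} (hb : b = a * c) (hc : x * c = c * x) :
    a * x * a⁻¹ = b * x * b⁻¹ := by
  subst hb
  have h1 : a * c * x * (a * c)⁻¹ = a * (c * x * c⁻¹) * a⁻¹ := by group
  have h2 : c * x * c⁻¹ = x := by rw [← hc]; group
  rw [h1, h2]

lemma aux_conj_eq' {x a b : G} (h : a * x * a⁻¹ = b * x * b⁻¹) :
    x * (a⁻¹ * b) = (a⁻¹ * b) * x := by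
  have h1 : x * (a⁻¹ * b) = a⁻¹ * (a * x * a⁻¹) * b := by group
  rw [h1, h]
  group

/-- Orbit-stabilizer for conjugation of a subgroup `K` on an element `x`. -/
lemma aux_conjOrbit_card [Fintype G] (K : Subgroup G) (x : G) :
    Nat.card ((fun u => u * x * u⁻¹) '' (K : Set G)) *
      Nat.card ((Subgroup.centralizer {x} ⊓ K : Subgroup G)) = Nat.card K := by
  classical
  set C := Subgroup.centralizer {x} with hC
  set S : Subgroup ↥K := C.subgroupOf K with hS
  let f : ↥K → G := fun u => (u : G) * x * (u : G)⁻¹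
  have hmemC : ∀ c : G, c ∈ C ↔ x * c = c * x := by
    intro c
    rw [hC, Subgroup.mem_centralizer_iff]
    constructor
    · intro h; exact h x (Set.mem_singleton x)
    · intro h g hg; rw [Set.mem_singleton_iff] at hg; subst hg; exact h
  have hconj : ∀ a b : ↥K,
      (x * ((a : G)⁻¹ * (b : G)) = ((a : G)⁻¹ * (b : G)) * x) ↔ f a = f b := by
    intro a b
    constructor
    · intro h
      exact aux_conj_eq (by group) h
    · intro h
      exact aux_conj_eq' h
  have hresp : ∀ a b : ↥K, @Setoid.r _ (QuotientGroup.leftRel S) a b → f a = f b := by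
    intro a b hab
    rw [QuotientGroup.leftRel_apply, Subgroup.mem_subgroupOf] at hab
    rw [hmemC] at hab
    push_cast at hab
    exact (hconj a b).mp hab
  let F : (↥K ⧸ S) → G := fun q => Quotient.liftOn' q f hresp
  have hFmk : ∀ a : ↥K, F (QuotientGroup.mk a) = f a := fun a => rfl
  have hFinj : Function.Injective F := by
    intro q₁ q₂
    induction q₁ using QuotientGroup.induction_on
    induction q₂ using QuotientGroup.induction_on
    rename_i a b
    intro h
    rw [hFmk, hFmk] at h
    refine Quotient.sound' ?_
    rw [QuotientGroup.leftRel_apply, Subgroup.mem_subgroupOf, hmemC]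
    push_cast
    exact (hconj a b).mpr h
  have hrange : Set.range F = (fun u => u * x * u⁻¹) '' (K : Set G) := by
    ext y
    constructor
    · rintro ⟨q, rfl⟩
      induction q using QuotientGroup.induction_on
      rename_i a
      exact ⟨(a : G), a.2, rfl⟩
    · rintro ⟨u, hu, rfl⟩
      exact ⟨QuotientGroup.mk (⟨u, hu⟩ : ↥K), rfl⟩
  have hcard1 : Nat.card (↥K ⧸ S) = Nat.card ((fun u => u * x * u⁻¹) '' (K : Set G)) := by
    rw [← hrange]
    exact Nat.card_congr (Equiv.ofInjective F hFinj)
  have hcard2 : Nat.card S = Nat.card (C ⊓ K : Subgroup G) := by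
    rw [hS, ← Subgroup.inf_subgroupOf_right C K]
    exact Nat.card_congr (Subgroup.subgroupOfEquivOfLe (inf_le_right : C ⊓ K ≤ K)).toEquiv
  have hmain : Nat.card S * S.index = Nat.card ↥K := Subgroup.card_mul_index S
  have hidx : S.index = Nat.card (↥K ⧸ S) := rfl
  rw [← hcard1, ← hcard2, mul_comm, ← hidx, hmain]

lemma aux_inf_sup_le [Fintype G] [Fact p.Prime] (P : Sylow p G) {N H : Subgroup G}
    [N.Normal] (hNP : N ≤ (P : Subgroup G)) (hH : (Nat.card ↥H).Coprime p) :
    (P : Subgroup G) ⊓ (N ⊔ H) ≤ N := by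
  intro y hy
  obtain ⟨hyP, hyNH⟩ := Subgroup.mem_inf.mp hy
  rw [← SetLike.mem_coe, Subgroup.normal_mul] at hyNH
  obtain ⟨n, hn, h, hh, rfl⟩ := hyNH
  have hhP : h ∈ (P : Subgroup G) := by
    have := (P : Subgroup G).mul_mem (inv_mem (hNP hn)) hyP
    simpa [mul_assoc] using this
  obtain ⟨j, hj⟩ := aux_orderOf_dvd_ppow P.isPGroup' hhP
  have hdvdH : orderOf h ∣ Nat.card ↥H := by
    have h1 : orderOf (⟨h, hh⟩ : ↥H) ∣ Nat.card ↥H := orderOf_dvd_natCard _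
    rwa [Subgroup.orderOf_mk] at h1
  have hcop : Nat.Coprime (p ^ j) (Nat.card ↥H) := (hH.pow_right j).symm
  have h1 : orderOf h ∣ Nat.gcd (p ^ j) (Nat.card ↥H) := Nat.dvd_gcd hj hdvdH
  rw [hcop] at h1
  have h2 : h = 1 := orderOf_eq_one_iff.mp (Nat.eq_one_of_dvd_one h1)
  subst h2
  simpa using hn

lemma aux_card_inf [Fintype G] [Fact p.Prime] (P : Sylow p G)
    (hPn : (P : Subgroup G).Normal) (K : Subgroup G) :
    ∃ i, Nat.card ↥K = Nat.card ↥((P : Subgroup G) ⊓ K) * i ∧ ¬ p ∣ i := by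
  haveI := hPn
  refine ⟨(P : Subgroup G).relIndex K, ?_, ?_⟩
  · have h1 : Nat.card ((P : Subgroup G).subgroupOf K) * ((P : Subgroup G).subgroupOf K).index
        = Nat.card ↥K := Subgroup.card_mul_index _
    have h2 : Nat.card ((P : Subgroup G).subgroupOf K) = Nat.card ↥((P : Subgroup G) ⊓ K) := by
      rw [← Subgroup.inf_subgroupOf_right]
      exact Nat.card_congr (Subgroup.subgroupOfEquivOfLe inf_le_right).toEquiv
    rw [← h1, h2]
    rfl
  · intro hdvd
    exact P.not_dvd_index (hdvd.trans (Subgroup.relIndex_dvd_index_of_normal _ _))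

lemma aux_camina_restrict [Fintype G] [Fact p.Prime] {N : Subgroup G} [N.Normal]
    (P : Sylow p G) (hPn : (P : Subgroup G).Normal) (hNp : IsPGroup p ↥N)
    (hcam : ∀ x ∉ N, ∀ n ∈ N, IsConj x (x * n))
    {x : G} (hxN : x ∉ N) {n : G} (hn : n ∈ N) :
    ∃ u ∈ (P : Subgroup G), u * x * u⁻¹ = x * n := by
  classical
  set C := Subgroup.centralizer {x} with hCdef
  set A := (Subgroup.centralizer {((x : G) : G ⧸ N)}).comap (QuotientGroup.mk' N) with hAdef
  have hmemA : ∀ g : G, g ∈ A ↔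
      ((x : G ⧸ N) * ((g : G) : G ⧸ N) = ((g : G) : G ⧸ N) * (x : G ⧸ N)) := by
    intro g
    rw [hAdef, Subgroup.mem_comap]
    exact aux_mem_centralizer_iff
  have hCA : C ≤ A := by
    intro c hc
    rw [hmemA]
    have h1 : x * c = c * x := aux_mem_centralizer_iff.mp hc
    have h2 := congrArg (QuotientGroup.mk (s := N)) h1
    rw [QuotientGroup.mk_mul, QuotientGroup.mk_mul] at h2
    exact h2
  have hconj_mem : ∀ g ∈ A, x⁻¹ * (g * x * g⁻¹) ∈ N := by
    intro g hg
    rw [hmemA] at hg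
    have h1 : ((g * x * g⁻¹ : G) : G ⧸ N) = ((x : G) : G ⧸ N) := by
      rw [QuotientGroup.mk_mul, QuotientGroup.mk_mul, QuotientGroup.mk_inv, ← hg]
      group
    exact QuotientGroup.eq.mp h1.symm
  have himg_sub : ∀ (K : Subgroup G), K ≤ A →
      ((fun u => u * x * u⁻¹) '' (K : Set G)) ⊆ ((fun n => x * n) '' (N : Set G)) := by
    rintro K hK y ⟨u, hu, rfl⟩
    exact ⟨x⁻¹ * (u * x * u⁻¹), hconj_mem u (hK hu), by group⟩
  have himg_A : ((fun u => u * x * u⁻¹) '' (A : Set G)) = ((fun n => x * n) '' (N : Set G)) := by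
    refine Set.Subset.antisymm (himg_sub A le_rfl) ?_
    rintro y ⟨n', hn', rfl⟩
    obtain ⟨c, hc⟩ := isConj_iff.mp (hcam x hxN n' hn')
    have hcA : c ∈ A := by
      rw [hmemA]
      have h1 := congrArg (QuotientGroup.mk (s := N)) hc
      rw [QuotientGroup.mk_mul, QuotientGroup.mk_mul, QuotientGroup.mk_inv,
        QuotientGroup.mk_mul, (QuotientGroup.eq_one_iff n').mpr hn', mul_one] at h1
      have h2 : ((c : G) : G ⧸ N) * (x : G ⧸ N) = (x : G ⧸ N) * (c : G ⧸ N) := by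
        calc ((c : G) : G ⧸ N) * (x : G ⧸ N)
            = ((c : G) : G ⧸ N) * (x : G ⧸ N) * ((c : G) : G ⧸ N)⁻¹ * ((c : G) : G ⧸ N) := by
              group
          _ = (x : G ⧸ N) * (c : G ⧸ N) := by rw [h1]
      exact h2.symm
    exact ⟨c, hcA, hc⟩
  have hcardxN : Nat.card ((fun n => x * n) '' (N : Set G)) = Nat.card ↥N := by
    rw [Nat.card_coe_set_eq, Set.ncard_image_of_injective _ (mul_right_injective x),
      ← Nat.card_coe_set_eq]
    rfl
  have e1 := aux_conjOrbit_card A x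
  rw [himg_A, hcardxN, ← hCdef, inf_of_le_left hCA] at e1
  obtain ⟨iA, hAeq, hiA⟩ := aux_card_inf P hPn A
  obtain ⟨iC, hCeq, hiC⟩ := aux_card_inf P hPn C
  obtain ⟨a, ha⟩ := IsPGroup.iff_card.mp
    (IsPGroup.to_le P.isPGroup' (inf_le_left : (P : Subgroup G) ⊓ A ≤ (P : Subgroup G)))
  obtain ⟨c0, hc0⟩ := IsPGroup.iff_card.mp
    (IsPGroup.to_le P.isPGroup' (inf_le_left : (P : Subgroup G) ⊓ C ≤ (P : Subgroup G)))
  obtain ⟨e, he⟩ := IsPGroup.iff_card.mp hNp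
  have hp : p.Prime := Fact.out
  have key : Nat.card ↥((P : Subgroup G) ⊓ A) =
      Nat.card ↥N * Nat.card ↥((P : Subgroup G) ⊓ C) := by
    have h2 : p ^ a * iA = p ^ (e + c0) * iC := by
      rw [pow_add, ← ha, ← he, ← hc0, ← hAeq, mul_assoc, ← hCeq, ← e1]
    have hcopA : Nat.Coprime (p ^ (e + c0)) iA :=
      Nat.Coprime.pow_left _ (hp.coprime_iff_not_dvd.mpr hiA)
    have hcopC : Nat.Coprime (p ^ a) iC :=
      Nat.Coprime.pow_left _ (hp.coprime_iff_not_dvd.mpr hiC)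
    have d1 : p ^ a ∣ p ^ (e + c0) :=
      hcopC.dvd_of_dvd_mul_right ⟨iA, h2.symm⟩
    have d2 : p ^ (e + c0) ∣ p ^ a :=
      hcopA.dvd_of_dvd_mul_right ⟨iC, h2⟩
    rw [ha, hc0, he, ← pow_add]
    exact Nat.dvd_antisymm d1 d2
  have e2 := aux_conjOrbit_card ((P : Subgroup G) ⊓ A) x
  have hCinf : C ⊓ ((P : Subgroup G) ⊓ A) = (P : Subgroup G) ⊓ C := by
    rw [inf_left_comm, inf_of_le_left hCA]
  rw [← hCdef, hCinf, key] at e2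
  have hpos : 0 < Nat.card ↥((P : Subgroup G) ⊓ C) := Nat.card_pos
  have himgcard : Nat.card ((fun u => u * x * u⁻¹) '' (((P : Subgroup G) ⊓ A) : Set G))
      = Nat.card ↥N := Nat.eq_of_mul_eq_mul_right hpos e2
  have hsub := himg_sub ((P : Subgroup G) ⊓ A) inf_le_right
  have hseteq : ((fun u => u * x * u⁻¹) '' (((P : Subgroup G) ⊓ A) : Set G))
      = ((fun n => x * n) '' (N : Set G)) := by
    refine Set.eq_of_subset_of_ncard_le hsub ?_ (Set.toFinite _)
    rw [← Nat.card_coe_set_eq, ← Nat.card_coe_set_eq, himgcard, hcardxN]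
  have hxn : x * n ∈ ((fun n => x * n) '' (N : Set G)) := ⟨n, hn, rfl⟩
  rw [← hseteq] at hxn
  obtain ⟨u, hu, hueq⟩ := hxn
  exact ⟨u, (Subgroup.mem_inf.mp hu).1, hueq⟩

lemma aux_cancel {G : Type*} [Group G] {x a b : G}
    (h : x⁻¹ * a * x * a⁻¹ = x⁻¹ * b * x * b⁻¹) : x * (b⁻¹ * a) = (b⁻¹ * a) * x := by
  have h1 : a * x * a⁻¹ = b * x * b⁻¹ := by
    have h2 := congrArg (fun z => x * z) h
    simp only [← mul_assoc, mul_inv_cancel, one_mul] at h2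
    exact h2
  have h2 : x * (b⁻¹ * a) = b⁻¹ * (b * x * b⁻¹) * a := by group
  rw [h2, ← h1]
  group

lemma aux_solve {G : Type*} [Group G] {x mmv n : G}
    (h : x⁻¹ * mmv * x * mmv⁻¹ = n) : mmv * x * mmv⁻¹ = x * n := by
  rw [← h]; group


end Helpers

/-- `(G, N)` is a Camina pair: `N` is a nontrivial proper (normal) subgroup of `G` and
every `x ∈ G \ N` is conjugate to every element of the coset `xN`. -/
def IsCaminaPair {G : Type*} [Group G] (N : Subgroup G) : Prop :=
  N ≠ ⊥ ∧ N ≠ ⊤ ∧ ∀ x ∉ N, ∀ n ∈ N, IsConj x (x * n)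

theorem camina_type3_pClosed_iff {G : Type*} [Group G] [Fintype G]
    (p : ℕ) [Fact p.Prime] (N : Subgroup G) [N.Normal]
    (hNbot : N ≠ ⊥) (hNp : IsPGroup p ↥N) (P : Sylow p G) :
    (IsCaminaPair N ∧ p ∣ N.index ∧ ¬ IsPGroup p (G ⧸ N) ∧
        (P : Subgroup G).Normal) ↔
    ((P : Subgroup G) ≠ ⊤ ∧ (P : Subgroup G).Normal ∧
      IsCaminaPair (N.subgroupOf P) ∧
      -- `G` has a Hall `p`-complement `H` such that `NH` is a Frobenius group
      -- with Frobenius kernel `N`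
      ∃ H : Subgroup G, (Nat.card ↥H).Coprime p ∧ (∃ k : ℕ, H.index = p ^ k) ∧
        N ≠ ⊥ ∧ N < N ⊔ H ∧
        ∀ g ∈ N ⊔ H, g ∉ N → ∀ m ∈ N, g * m = m * g → m = 1) := by
  have hp : p.Prime := Fact.out
  constructor
  · rintro ⟨⟨hN1, hN2, hcam⟩, hdvd, hnotp, hPn⟩
    have hNP : N ≤ (P : Subgroup G) := by
      obtain ⟨Q, hQ⟩ := hNp.exists_le_sylow
      haveI := Sylow.unique_of_normal P hPn
      rwa [Subsingleton.elim Q P] at hQ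
    have hPtop : (P : Subgroup G) ≠ ⊤ := by
      intro htop
      apply hnotp
      have hG : IsPGroup p G := by
        intro g
        obtain ⟨kk, hkk⟩ := P.isPGroup' ⟨g, htop ▸ Subgroup.mem_top g⟩
        exact ⟨kk, by simpa [Subtype.ext_iff] using hkk⟩
      exact hG.to_quotient N
    have hPidx : ¬ p ∣ (P : Subgroup G).index := P.not_dvd_index
    have hCaminaP : IsCaminaPair (N.subgroupOf (P : Subgroup G)) := by
      refine ⟨?_, ?_, ?_⟩
      · intro hbot
        apply hN1
        rw [eq_bot_iff]
        intro y hy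
        have h1 : (⟨y, hNP hy⟩ : ↥(P : Subgroup G)) ∈ N.subgroupOf (P : Subgroup G) :=
          Subgroup.mem_subgroupOf.mpr hy
        rw [hbot, Subgroup.mem_bot] at h1
        have : y = 1 := congrArg Subtype.val h1
        simp [this]
      · intro htop
        have hPN : (P : Subgroup G) ≤ N := Subgroup.subgroupOf_eq_top.mp htop
        have hEq : N = (P : Subgroup G) := le_antisymm hNP hPN
        rw [hEq] at hdvd
        exact hPidx hdvd
      · rintro x' hx' n' hn'
        have hxN : (x' : G) ∉ N := fun h => hx' (Subgroup.mem_subgroupOf.mpr h)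
        have hnN : (n' : G) ∈ N := Subgroup.mem_subgroupOf.mp hn'
        obtain ⟨u, huP, hueq⟩ := aux_camina_restrict P hPn hNp hcam hxN hnN
        rw [isConj_iff]
        refine ⟨⟨u, huP⟩, ?_⟩
        ext
        push_cast
        exact hueq
    obtain ⟨nP, hcardP⟩ := IsPGroup.iff_card.mp P.isPGroup'
    have hcop : Nat.Coprime (Nat.card ↥(P : Subgroup G)) (P : Subgroup G).index := by
      rw [hcardP]
      exact Nat.Coprime.pow_left _ (hp.coprime_iff_not_dvd.mpr hPidx)
    haveI := hPn
    obtain ⟨H, hcomp⟩ := Subgroup.exists_right_complement'_of_coprime hcop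
    have hHidx : H.index = Nat.card ↥(P : Subgroup G) := hcomp.index_eq_card
    have hHcard : Nat.card ↥H = (P : Subgroup G).index := (hcomp.symm.index_eq_card).symm
    have hHcop : (Nat.card ↥H).Coprime p := by
      rw [hHcard]
      exact (hp.coprime_iff_not_dvd.mpr hPidx).symm
    refine ⟨hPtop, hPn, hCaminaP, H, hHcop, ⟨nP, by rw [hHidx, hcardP]⟩, hN1, ?_, ?_⟩
    · refine lt_of_le_of_ne le_sup_left ?_
      intro heq
      have hHN : H ≤ N := heq ▸ le_sup_right
      have h1 : Nat.card ↥H ∣ Nat.card ↥N := Subgroup.card_dvd_of_le hHN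
      obtain ⟨e, he⟩ := IsPGroup.iff_card.mp hNp
      rw [he] at h1
      have h2 : Nat.card ↥H = 1 := by
        have hco : Nat.Coprime (Nat.card ↥H) (p ^ e) := hHcop.pow_right e
        have := Nat.Coprime.coprime_dvd_right h1 hco
        rwa [Nat.Coprime, Nat.gcd_self] at this
      have h3 : (P : Subgroup G).index = 1 := by rw [← hHcard, h2]
      exact hPtop (Subgroup.index_eq_one.mp h3)
    · intro g hgNH hgN m hm hcomm
      have hgP : g ∉ (P : Subgroup G) := fun hgP2 =>
        hgN (aux_inf_sup_le P hNP hHcop (Subgroup.mem_inf.mpr ⟨hgP2, hgNH⟩))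
      have hord : ¬ ∃ kk, orderOf g = p ^ kk := fun h => hgP (aux_ppow_mem_sylow P hPn h)
      obtain ⟨q, hq, hqp, kk, hkk⟩ := aux_exists_prime_order hord
      have hsp : ¬ p ∣ orderOf (g ^ kk) := by
        rw [hkk]
        intro hd
        exact hqp ((Nat.prime_dvd_prime_iff_eq hp hq).mp hd).symm
      have hs1 : g ^ kk ≠ 1 := by
        intro h
        rw [h, orderOf_one] at hkk
        exact hq.one_lt.ne' hkk.symm
      have hsN : g ^ kk ∉ N := aux_notMem_of_not_dvd hNp hs1 hsp
      have hcomm' : Commute (g ^ kk) m := (show Commute g m from hcomm).pow_left kk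
      exact aux_order_trick hNp hcam hm hcomm' hsp hsN
  · rintro ⟨hPtop, hPn, hCamP, H, hHcop, ⟨k, hHidx⟩, _, hNlt, hFr⟩
    have hNP : N ≤ (P : Subgroup G) := by
      obtain ⟨Q, hQ⟩ := hNp.exists_le_sylow
      haveI := Sylow.unique_of_normal P hPn
      rwa [Subsingleton.elim Q P] at hQ
    have hNtop : N ≠ ⊤ := ne_top_of_lt hNlt
    obtain ⟨nP, hcardP⟩ := IsPGroup.iff_card.mp P.isPGroup'
    -- p ∣ N.index
    have hsub_ne_top : N.subgroupOf (P : Subgroup G) ≠ ⊤ := hCamP.2.1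
    have hrel : (N.subgroupOf (P : Subgroup G)).index ∣ p ^ nP := by
      rw [← hcardP]
      exact Subgroup.index_dvd_card _
    obtain ⟨j, hjle, hjeq⟩ := (Nat.dvd_prime_pow hp).mp hrel
    have hj0 : j ≠ 0 := by
      intro h
      rw [h, pow_zero] at hjeq
      exact hsub_ne_top (Subgroup.index_eq_one.mp hjeq)
    have hpdvd_rel : p ∣ (N.subgroupOf (P : Subgroup G)).index := by
      rw [hjeq]
      exact dvd_pow_self p hj0
    have hdvd : p ∣ N.index := by
      have h1 : N.relIndex (P : Subgroup G) * (P : Subgroup G).index = N.index :=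
        Subgroup.relIndex_mul_index hNP
      rw [← h1]
      exact Dvd.dvd.mul_right hpdvd_rel _
    -- G/N is not a p-group
    obtain ⟨h0, hh0H, hh0N⟩ : ∃ h0 ∈ H, h0 ∉ N := by
      by_contra hcon
      push_neg at hcon
      have hHN : H ≤ N := hcon
      rw [sup_eq_left.mpr hHN] at hNlt
      exact lt_irrefl N hNlt
    have hnotp : ¬ IsPGroup p (G ⧸ N) := by
      intro hQ
      obtain ⟨j2, hj2⟩ := hQ ((h0 : G) : G ⧸ N)
      have hdvd1 : orderOf ((h0 : G) : G ⧸ N) ∣ p ^ j2 := orderOf_dvd_of_pow_eq_one hj2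
      have hdvd2 : orderOf ((h0 : G) : G ⧸ N) ∣ Nat.card ↥H := by
        refine dvd_trans (orderOf_map_dvd (QuotientGroup.mk' N) h0) ?_
        have h1 : orderOf (⟨h0, hh0H⟩ : ↥H) ∣ Nat.card ↥H := orderOf_dvd_natCard _
        rwa [Subgroup.orderOf_mk] at h1
      have hco : Nat.Coprime (p ^ j2) (Nat.card ↥H) := (hHcop.pow_right j2).symm
      have h1 : orderOf ((h0 : G) : G ⧸ N) ∣ Nat.gcd (p ^ j2) (Nat.card ↥H) :=
        Nat.dvd_gcd hdvd1 hdvd2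
      rw [hco] at h1
      have h2 : ((h0 : G) : G ⧸ N) = 1 := orderOf_eq_one_iff.mp (Nat.eq_one_of_dvd_one h1)
      exact hh0N ((QuotientGroup.eq_one_iff h0).mp h2)
    have hconj : ∀ x ∉ N, ∀ n ∈ N, IsConj x (x * n) := by
      intro x hxN n hn
      by_cases hxP : x ∈ (P : Subgroup G)
      · have hx' : (⟨x, hxP⟩ : ↥(P : Subgroup G)) ∉ N.subgroupOf (P : Subgroup G) :=
          fun h => hxN (Subgroup.mem_subgroupOf.mp h)
        have hn' : (⟨n, hNP hn⟩ : ↥(P : Subgroup G)) ∈ N.subgroupOf (P : Subgroup G) :=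
          Subgroup.mem_subgroupOf.mpr hn
        have h1 := hCamP.2.2 _ hx' _ hn'
        have h2 := (P : Subgroup G).subtype.map_isConj h1
        simpa using h2
      · have Cm : ∀ w ∈ N, x * w = w * x → w = 1 := by
          intro w hw hcw
          have hord : ¬ ∃ j3, orderOf x = p ^ j3 := fun h => hxP (aux_ppow_mem_sylow P hPn h)
          obtain ⟨q, hq, hqp, kk, hkk⟩ := aux_exists_prime_order hord
          haveI : Fact q.Prime := ⟨hq⟩
          have hs1 : x ^ kk ≠ 1 := by
            intro h
            rw [h, orderOf_one] at hkk
            exact hq.one_lt.ne' hkk.symm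
          have hscomm : Commute (x ^ kk) w := (show Commute x w from hcw).pow_left kk
          obtain ⟨Q₀⟩ : Nonempty (Sylow q ↥H) := inferInstance
          have hS₀p : IsPGroup q ↥((Q₀ : Subgroup ↥H).map H.subtype) := Q₀.isPGroup'.map _
          obtain ⟨Q₁, hle⟩ := hS₀p.exists_le_sylow
          have hfact : (Nat.card G).factorization q = (Nat.card ↥H).factorization q := by
            conv_lhs => rw [← Subgroup.card_mul_index H]
            rw [hHidx, Nat.factorization_mul Nat.card_pos.ne' (pow_ne_zero k hp.pos.ne')]
            rw [hp.factorization_pow]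
            simp [Finsupp.single_apply, Ne.symm hqp]
          have hcards : Nat.card ↥(Q₁ : Subgroup G) ≤
              Nat.card ↥((Q₀ : Subgroup ↥H).map H.subtype) := by
            have h1 : Nat.card ↥((Q₀ : Subgroup ↥H).map H.subtype)
                = Nat.card ↥(Q₀ : Subgroup ↥H) :=
              (Nat.card_congr (Subgroup.equivMapOfInjective _ _ H.subtype_injective).toEquiv).symm
            rw [h1, Sylow.card_eq_multiplicity Q₀, Sylow.card_eq_multiplicity Q₁, hfact]
          have hSQ : (Q₀ : Subgroup ↥H).map H.subtype = (Q₁ : Subgroup G) :=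
            aux_eq_of_le_card hle hcards
          have hzp : IsPGroup q ↥(Subgroup.zpowers (x ^ kk)) :=
            IsPGroup.of_card (by rw [Nat.card_zpowers, hkk, pow_one])
          obtain ⟨Q₂, hsQ₂⟩ := hzp.exists_le_sylow
          obtain ⟨g, hg⟩ := MulAction.exists_smul_eq G Q₁ Q₂
          have hs2 : x ^ kk ∈ (Q₂ : Subgroup G) := hsQ₂ (Subgroup.mem_zpowers _)
          rw [← hg] at hs2
          have hs3 : x ^ kk ∈ MulAut.conj g • (Q₁ : Subgroup G) := hs2
          obtain ⟨y, hy, hyeq⟩ := (Subgroup.mem_smul_pointwise_iff_exists (x ^ kk) (MulAut.conj g) (Q₁ : Subgroup G)).mp hs3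
          rw [← hSQ] at hy
          have hyH : y ∈ H := Subgroup.map_subtype_le _ hy
          have hyeq' : g * y * g⁻¹ = x ^ kk := by
            simpa [MulAut.smul_def, MulAut.conj_apply] using hyeq
          have hsemi : SemiconjBy g y (x ^ kk) := by
            rw [SemiconjBy, ← hyeq']
            group
          have hyord : orderOf y = q := (SemiconjBy.orderOf_eq g hsemi).trans hkk
          have hy1 : y ≠ 1 := by
            intro h
            rw [h, orderOf_one] at hyord
            exact hq.one_lt.ne' hyord.symm
          have hyN : y ∉ N := by
            refine aux_notMem_of_not_dvd hNp hy1 ?_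
            rw [hyord]
            intro hd
            exact hqp ((Nat.prime_dvd_prime_iff_eq hp hq).mp hd).symm
          have hw'N : g⁻¹ * w * g ∈ N := by
            have h1 := (inferInstance : N.Normal).conj_mem w hw g⁻¹
            simpa using h1
          have hcomm2 : y * (g⁻¹ * w * g) = (g⁻¹ * w * g) * y := by
            have hy2 : y = g⁻¹ * (x ^ kk) * g := by rw [← hyeq']; group
            have hsw : (x ^ kk) * w = w * (x ^ kk) := hscomm.eq
            rw [hy2]
            calc (g⁻¹ * (x ^ kk) * g) * (g⁻¹ * w * g) = g⁻¹ * ((x ^ kk) * w) * g := by group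
              _ = g⁻¹ * (w * (x ^ kk)) * g := by rw [hsw]
              _ = (g⁻¹ * w * g) * (g⁻¹ * (x ^ kk) * g) := by group
          have hw'1 : g⁻¹ * w * g = 1 :=
            hFr y ((le_sup_right : H ≤ N ⊔ H) hyH) hyN _ hw'N hcomm2
          calc w = g * (g⁻¹ * w * g) * g⁻¹ := by group
            _ = 1 := by rw [hw'1]; group
        -- the bijection N → N
        let f : ↥N → ↥N := fun mm =>
          ⟨x⁻¹ * (mm : G) * x * (mm : G)⁻¹, by
            refine N.mul_mem ?_ (N.inv_mem mm.2)
            have h1 := (inferInstance : N.Normal).conj_mem (mm : G) mm.2 x⁻¹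
            simpa [mul_assoc] using h1⟩
        have hfinj : Function.Injective f := by
          intro m1 m2 h12
          have h := congrArg Subtype.val h12
          have hxw := aux_cancel (a := (m1 : G)) (b := (m2 : G)) (x := x) h
          have h1 := Cm _ (N.mul_mem (N.inv_mem m2.2) m1.2) hxw
          have h2 : (m1 : G) = (m2 : G) := by
            have := congrArg (fun z => (m2 : G) * z) h1
            simpa [mul_assoc] using this
          exact Subtype.ext h2
        have hfsurj : Function.Surjective f := Finite.surjective_of_injective hfinj
        obtain ⟨mm, hmm⟩ := hfsurj ⟨n, hn⟩
        rw [isConj_iff]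
        refine ⟨(mm : G), aux_solve ?_⟩
        exact congrArg Subtype.val hmm
    exact ⟨⟨hNbot, hNtop, hconj⟩, hdvd, hnotp, hPn⟩
end

section
/- Let n ≥ 2, let F be the finite field GF(2ⁿ), and let G be a finite group with a normal subgroup N such that: every element of N has order dividing 2 (N is elementary abelian 2-group); C_G(N) = N; there is an isomorphism of G/N with SL(2,F); and N carries an F-vector space structure for which the conjugation action of G/N on N is F-linear and under which N, viewed as a module for SL(2,F) via the isomorphism, is a direct sum of copies of the natural 2-dimensional module F². Then (G,N) is not an equal order pair; that is, there exists x ∈ G∖N and elements of the coset xN of different orders. -/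
theorem not_equal_order_pair_of_SL2_natural_modules
    (n : ℕ) (hn : 2 ≤ n) {G : Type*} [Group G] [Fintype G]
    (N : Subgroup G) [N.Normal]
    -- every element of `N` has order dividing 2
    (hsq : ∀ m ∈ N, m * m = 1)
    -- `C_G(N) = N`
    (hcent : Subgroup.centralizer (N : Set G) = N)
    -- an isomorphism of `G/N` with `SL(2, GF(2^n))`
    (φ : G ⧸ N ≃* Matrix.SpecialLinearGroup (Fin 2) (GaloisField 2 n))
    -- `N`, as a module for `G/N ≅ SL(2, GF(2^n))` via conjugation, is a direct sum of
    -- `k` copies of the natural module `GF(2^n)²`: there is an isomorphism of groups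
    -- from `N` to `(GF(2^n)²)^k` carrying conjugation to the natural matrix action
    (k : ℕ)
    (e : ↥N ≃* Multiplicative (Fin k → Fin 2 → GaloisField 2 n))
    (he : ∀ (g : G) (m m' : ↥N), (m' : G) = g * (m : G) * g⁻¹ →
      Multiplicative.toAdd (e m') = fun i : Fin k =>
        ((φ (QuotientGroup.mk g) :
            Matrix.SpecialLinearGroup (Fin 2) (GaloisField 2 n)) :
          Matrix (Fin 2) (Fin 2) (GaloisField 2 n)).mulVec
            (Multiplicative.toAdd (e m) i)) :
    -- `(G, N)` is not an equal order pair: some nontrivial coset of `N`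
    -- contains elements of different orders
    ∃ x ∉ N, ∃ m ∈ N, orderOf (x * m) ≠ orderOf x := by
  classical
  set F := GaloisField 2 n with hFdef
  -- the transvection
  set A : Matrix (Fin 2) (Fin 2) F := !![1,1;0,1] with hAdef
  have hdet : A.det = 1 := by simp [hAdef, Matrix.det_fin_two_of]
  set t : Matrix.SpecialLinearGroup (Fin 2) F := ⟨A, hdet⟩ with htdef
  have hmulVec : ∀ w : Fin 2 → F, A.mulVec w = ![w 0 + w 1, w 1] := by
    intro w; ext j; fin_cases j <;>
      simp [hAdef, Matrix.mulVec, dotProduct, Fin.sum_univ_two]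
  have ht2 : t * t = 1 := by
    apply Subtype.ext
    show A * A = 1
    ext i j
    fin_cases i <;> fin_cases j <;>
      simp [hAdef, Matrix.mul_apply, Fin.sum_univ_two, Matrix.one_apply,
        CharTwo.add_self_eq_zero]
  have ht1 : t ≠ 1 := by
    intro h
    have h01 := congrArg
      (fun s : Matrix.SpecialLinearGroup (Fin 2) F => (s : Matrix (Fin 2) (Fin 2) F) 0 1) h
    simp [htdef, hAdef, Matrix.one_apply] at h01
  obtain ⟨x, hx⟩ := QuotientGroup.mk_surjective (φ.symm t)
  have hφx : φ (QuotientGroup.mk x) = t := by rw [hx, MulEquiv.apply_symm_apply]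
  have hxN : x ∉ N := by
    intro h
    apply ht1
    have : (QuotientGroup.mk x : G ⧸ N) = 1 := (QuotientGroup.eq_one_iff x).mpr h
    rw [this, map_one] at hφx
    exact hφx.symm
  -- k ≠ 0
  have hk : 0 < k := by
    rcases Nat.eq_zero_or_pos k with h0 | h; swap; · exact h
    exfalso
    subst h0
    have hN1 : ∀ m ∈ N, m = (1 : G) := by
      intro m hm
      have : (⟨m, hm⟩ : N) = 1 := e.injective (funext fun i => i.elim0)
      exact congrArg Subtype.val this
    have : Subgroup.centralizer (N : Set G) = ⊤ := by
      rw [eq_top_iff]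
      intro g _
      rw [Subgroup.mem_centralizer_iff]
      intro m hm
      rw [hN1 m hm, one_mul, mul_one]
    rw [hcent] at this
    exact hxN (this ▸ Subgroup.mem_top x)
  -- x*x ∈ N
  have hx2 : x * x ∈ N := by
    rw [← QuotientGroup.eq_one_iff]
    have : (QuotientGroup.mk (x * x) : G ⧸ N) = QuotientGroup.mk x * QuotientGroup.mk x := rfl
    rw [this, ← φ.symm_apply_apply (QuotientGroup.mk x * QuotientGroup.mk x), map_mul, hφx, ht2,
      map_one]
  set z : N := ⟨x * x, hx2⟩ with hzdef
  -- z is fixed by conjugation by x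
  have hfix := he x z z (by
    show x * x = x * (x * x) * x⁻¹
    group)
  rw [hφx] at hfix
  have hz1 : ∀ i, Multiplicative.toAdd (e z) i 1 = 0 := by
    intro i
    have h0 := congrFun (congrFun hfix i) 0
    rw [show ((t : Matrix (Fin 2) (Fin 2) F)) = A from rfl, hmulVec] at h0
    simp only [Matrix.cons_val_zero] at h0
    have := add_left_cancel (a := Multiplicative.toAdd (e z) i 0)
      (b := 0) (c := Multiplicative.toAdd (e z) i 1) (by rw [add_zero]; exact h0)
    exact this.symm
  set c : Fin k → F := fun i => Multiplicative.toAdd (e z) i 0 with hcdef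
  have hez : Multiplicative.toAdd (e z) = fun i => ![c i, 0] := by
    funext i; ext j; fin_cases j
    · rfl
    · exact hz1 i
  -- the two perturbing elements
  set m₀ : N := e.symm (Multiplicative.ofAdd (fun i => ![(0:F), c i])) with hm₀def
  set m₁ : N := e.symm (Multiplicative.ofAdd (fun i => ![(0:F), c i + 1])) with hm₁def
  have hem₀ : Multiplicative.toAdd (e m₀) = fun i => ![(0:F), c i] := by
    rw [hm₀def, MulEquiv.apply_symm_apply]; rfl
  have hem₁ : Multiplicative.toAdd (e m₁) = fun i => ![(0:F), c i + 1] := by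
    rw [hm₁def, MulEquiv.apply_symm_apply]; rfl
  -- conjugates of m₀, m₁ by x⁻¹
  have hinv : φ (QuotientGroup.mk x⁻¹) = t := by
    have : (QuotientGroup.mk (x⁻¹ : G) : G ⧸ N) = (QuotientGroup.mk x)⁻¹ := rfl
    rw [this, map_inv, hφx]
    exact inv_eq_of_mul_eq_one_right ht2
  have conjmem : ∀ m : N, x⁻¹ * (m : G) * x ∈ N := by
    intro m
    have := Subgroup.Normal.conj_mem ‹N.Normal› (m : G) m.2 x⁻¹
    simpa using this
  set m₀' : N := ⟨x⁻¹ * (m₀ : G) * x, conjmem m₀⟩ with hm₀'def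
  set m₁' : N := ⟨x⁻¹ * (m₁ : G) * x, conjmem m₁⟩ with hm₁'def
  have hem₀' : Multiplicative.toAdd (e m₀') = fun i => A.mulVec ![(0:F), c i] := by
    have := he x⁻¹ m₀ m₀' (by show x⁻¹ * (m₀ : G) * x = x⁻¹ * (m₀ : G) * (x⁻¹)⁻¹; group)
    rw [hinv] at this
    rw [this, hem₀]
  have hem₁' : Multiplicative.toAdd (e m₁') = fun i => A.mulVec ![(0:F), c i + 1] := by
    have := he x⁻¹ m₁ m₁' (by show x⁻¹ * (m₁ : G) * x = x⁻¹ * (m₁ : G) * (x⁻¹)⁻¹; group)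
    rw [hinv] at this
    rw [this, hem₁]
  -- squares: (x * m)^2 = z * m' * m
  have hsq' : ∀ m m' : N, (m' : G) = x⁻¹ * (m : G) * x →
      (x * (m : G)) * (x * (m : G)) = ((z * m' * m : N) : G) := by
    intro m m' hm'
    have hco : ((z * m' * m : N) : G) = (x * x) * (m' : G) * (m : G) := by push_cast; rfl
    rw [hco, hm']
    group
  -- (x*m₀)^2 = 1
  have h₀ : (x * (m₀ : G)) * (x * (m₀ : G)) = 1 := by
    rw [hsq' m₀ m₀' rfl]
    have key : (z * m₀' * m₀ : N) = 1 := by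
      apply e.injective
      rw [map_mul, map_mul, map_one]
      refine Multiplicative.toAdd.injective ?_
      rw [toAdd_mul, toAdd_mul]
      show Multiplicative.toAdd (e z) + Multiplicative.toAdd (e m₀')
          + Multiplicative.toAdd (e m₀) = (0 : Fin k → Fin 2 → F)
      funext i
      have h1 := congrFun hez i
      have h2 := congrFun hem₀' i
      have h3 := congrFun hem₀ i
      simp only [Pi.add_apply, h1, h2, h3, hmulVec, Pi.zero_apply]
      ext j; fin_cases j <;>
        simp [CharTwo.add_self_eq_zero]
    rw [key]
    simp
  -- (x*m₁)^2 ≠ 1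
  have h₁ : (x * (m₁ : G)) * (x * (m₁ : G)) ≠ 1 := by
    rw [hsq' m₁ m₁' rfl]
    intro hcon
    have h1 : (z * m₁' * m₁ : N) = 1 := Subtype.ext (by simpa using hcon)
    have h2 : Multiplicative.toAdd (e z) + Multiplicative.toAdd (e m₁')
        + Multiplicative.toAdd (e m₁) = (0 : Fin k → Fin 2 → F) := by
      have := congrArg (fun u => Multiplicative.toAdd (e u)) h1
      simp only [map_mul, map_one, toAdd_mul] at this
      exact this
    have h3 := congrFun (congrFun h2 ⟨0, hk⟩) 0
    have ha := congrFun hez ⟨0, hk⟩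
    have hb := congrFun hem₁' ⟨0, hk⟩
    have hc := congrFun hem₁ ⟨0, hk⟩
    simp only [Pi.add_apply, ha, hb, hc, hmulVec, Pi.zero_apply] at h3
    simp only [Matrix.cons_val_zero, zero_add, add_zero] at h3
    -- h3 : c + (c + 1) = 0
    apply one_ne_zero (α := F)
    calc (1 : F) = c ⟨0, hk⟩ + c ⟨0, hk⟩ + 1 := by
          rw [CharTwo.add_self_eq_zero, zero_add]
      _ = 0 := by rw [add_assoc]; exact h3
  -- conclude
  have hx₀N : x * (m₀ : G) ∉ N := by
    intro h
    exact hxN (by simpa using N.mul_mem h (N.inv_mem m₀.2))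
  refine ⟨x * (m₀ : G), hx₀N, (m₀ : G)⁻¹ * (m₁ : G), N.mul_mem (N.inv_mem m₀.2) m₁.2, ?_⟩
  have hrw : x * (m₀ : G) * ((m₀ : G)⁻¹ * (m₁ : G)) = x * (m₁ : G) := by group
  rw [hrw]
  have ho₀ : orderOf (x * (m₀ : G)) = 2 := by
    apply orderOf_eq_prime
    · rw [pow_two]; exact h₀
    · intro h; exact hx₀N (h ▸ N.one_mem)
  have ho₁ : orderOf (x * (m₁ : G)) ≠ 2 := by
    intro h
    apply h₁
    rw [← pow_two]
    rw [← h]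
    exact pow_orderOf_eq_one _
  rw [ho₀]; exact ho₁
end

section
/- If (G,N) is a Camina pair, then either N is nilpotent (equivalently N ≤ F(G)) or every nilpotent normal subgroup of G is contained in N (equivalently F(G) ≤ N). -/
theorem camina_fitting_comparable {G : Type*} [Group G] [Fintype G]
    (N : Subgroup G) [N.Normal] (hC : IsCaminaPair N) :
    Group.IsNilpotent ↥N ∨
      ∀ K : Subgroup G, K.Normal → Group.IsNilpotent ↥K → K ≤ N := by
  by_cases h : ∀ K : Subgroup G, K.Normal → Group.IsNilpotent ↥K → K ≤ N
  · exact Or.inr h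
  · left
    push_neg at h
    obtain ⟨K, hKn, hKnil, hKN⟩ := h
    obtain ⟨x, hxK, hxN⟩ := SetLike.not_le_iff_exists.mp hKN
    -- N ≤ K
    have hNK : N ≤ K := by
      intro n hn
      obtain ⟨c, hc⟩ := hC.2.2 x hxN n hn
      have hxn : x * n ∈ K := by
        have h1 : (c : G) * x * (c : G)⁻¹ = x * n := by rw [hc.eq]; simp
        rw [← h1]
        exact hKn.conj_mem x hxK c
      have : x⁻¹ * (x * n) ∈ K := K.mul_mem (K.inv_mem hxK) hxn
      simpa using this
    haveI := hKnil
    exact nilpotent_of_mulEquiv (Subgroup.subgroupOfEquivOfLe hNK)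
end

section
/- Let (G,N) be a Camina pair such that G/N is a p-group for a prime p, and let P be a Sylow p-subgroup of G. Then every element of G∖N is conjugate in G to some element of P∖(P∩N). -/
theorem camina_conj_into_sylow {G : Type*} [Group G] [Fintype G]
    (N : Subgroup G) [N.Normal] (hC : IsCaminaPair N)
    (p : ℕ) [Fact p.Prime] (hquot : IsPGroup p (G ⧸ N)) (P : Sylow p G) :
    ∀ x ∉ N, ∃ y : G, y ∈ (P : Subgroup G) ∧ y ∉ N ∧ IsConj x y := by
  intro x hx
  set π := QuotientGroup.mk' N
  -- the image of P in G/N is the whole quotient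
  have hsurj : Function.Surjective π := QuotientGroup.mk'_surjective N
  have hdvd1 : ((P : Subgroup G).map π).index ∣ (P : Subgroup G).index :=
    Subgroup.index_map_dvd _ hsurj
  have hnotdvd : ¬ p ∣ ((P : Subgroup G).map π).index := fun h =>
    P.not_dvd_index (h.trans hdvd1)
  -- index divides card of G/N which is a p-power
  obtain ⟨n, hn⟩ := IsPGroup.iff_card.mp hquot
  have hdvd2 : ((P : Subgroup G).map π).index ∣ p ^ n :=
    hn ▸ Subgroup.index_dvd_card _
  have hone : ((P : Subgroup G).map π).index = 1 := by
    rcases (Nat.dvd_prime_pow (Fact.out : p.Prime)).mp hdvd2 with ⟨k, hk, hke⟩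
    rcases Nat.eq_zero_or_pos k with rfl | hkpos
    · simpa using hke
    · exact absurd (hke ▸ dvd_pow_self p hkpos.ne') hnotdvd
  have htop : ((P : Subgroup G).map π) = ⊤ := Subgroup.index_eq_one.mp hone
  -- pick y in P mapping to the same coset as x
  have : π x ∈ (P : Subgroup G).map π := htop ▸ Subgroup.mem_top _
  obtain ⟨y, hyP, hyx⟩ := this
  have hmem : y⁻¹ * x ∈ N := by
    have := (QuotientGroup.eq (s := N)).mp (by simpa [π] using hyx); simpa using this
  have hyN : y ∉ N := fun hy => hx (by simpa using N.mul_mem hy hmem)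
  refine ⟨y, hyP, hyN, ?_⟩
  have := hC.2.2 y hyN (y⁻¹ * x) hmem
  rw [mul_inv_cancel_left] at this
  exact this.symm
end

section
/- Let (G,N) be a Camina pair such that G/N is a p-group for a prime p. Then for every x ∈ G∖N, the centralizer C_G(x) is a p-group. -/
theorem camina_centralizer_pGroup {G : Type*} [Group G] [Fintype G]
    (N : Subgroup G) [N.Normal] (hC : IsCaminaPair N)
    (p : ℕ) (hp : p.Prime) (hquot : IsPGroup p (G ⧸ N)) :
    ∀ x ∉ N, IsPGroup p ↥(Subgroup.centralizer {x}) := by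
  classical
  haveI := Fact.mk hp
  intro x hx
  obtain ⟨-, -, hconj⟩ := hC
  -- The conjugacy class (orbit) of x
  set S : Set G := MulAction.orbit (ConjAct G) x with hSdef
  have hmem : ∀ y, y ∈ S ↔ IsConj x y := by
    intro y
    rw [hSdef, ConjAct.mem_orbit_conjAct, isConj_comm]
  -- Conjugates of x are not in N
  have hnotN : ∀ y, IsConj x y → y ∉ N := by
    intro y hy hyN
    obtain ⟨c, hc⟩ := hy
    have hx' : (↑c)⁻¹ * y * ↑c ∈ N := by
      simpa using ‹N.Normal›.conj_mem y hyN (↑c)⁻¹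
    have hxy : x = (↑c)⁻¹ * y * ↑c := by
      rw [mul_assoc, ← hc.eq, inv_mul_cancel_left]
    exact hx (hxy ▸ hx')
  -- S is a union of cosets of N
  have hSsat : S = QuotientGroup.mk ⁻¹' ((QuotientGroup.mk : G → G ⧸ N) '' S) := by
    apply subset_antisymm (Set.subset_preimage_image _ _)
    rintro y ⟨z, hz, hzy⟩
    have hzx : IsConj x z := (hmem z).mp hz
    have hn : z⁻¹ * y ∈ N := QuotientGroup.eq.mp hzy
    have hzN : z ∉ N := hnotN z hzx
    have : IsConj z (z * (z⁻¹ * y)) := hconj z hzN _ hn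
    rw [mul_inv_cancel_left] at this
    exact (hmem y).mpr (hzx.trans this)
  -- |N| divides |S|
  have hNdvd : Nat.card N ∣ Nat.card S := by
    rw [hSsat, Nat.card_congr (QuotientGroup.preimageMkEquivSubgroupProdSet N _),
      Nat.card_prod]
    exact ⟨_, rfl⟩
  -- orbit-stabilizer
  have horb : Nat.card S * Nat.card (MulAction.stabilizer (ConjAct G) x) = Nat.card G := by
    simp only [Nat.card_eq_fintype_card]
    exact MulAction.card_orbit_mul_card_stabilizer_eq_card_group (ConjAct G) x
  -- centralizer has same cardinality as stabilizer
  have hcent : Nat.card (Subgroup.centralizer ({x} : Set G)) =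
      Nat.card (MulAction.stabilizer (ConjAct G) x) := by
    rw [Subgroup.centralizer_eq_comap_stabilizer]
    exact Nat.card_congr ((ConjAct.toConjAct (G := G)).toEquiv.subtypeEquiv fun g => Iff.rfl)
  -- |G| = |G/N| * |N|
  have hlag : Nat.card G = Nat.card (G ⧸ N) * Nat.card N :=
    Subgroup.card_eq_card_quotient_mul_card_subgroup N
  -- conclude |C(x)| divides |G/N|
  obtain ⟨m, hm⟩ := hNdvd
  have hNpos : 0 < Nat.card N := Nat.card_pos
  have hdvd : Nat.card (Subgroup.centralizer ({x} : Set G)) ∣ Nat.card (G ⧸ N) := by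
    refine ⟨m, ?_⟩
    have : Nat.card N * (Nat.card (G ⧸ N)) =
        Nat.card N * (m * Nat.card (Subgroup.centralizer ({x} : Set G))) := by
      rw [hcent]
      calc Nat.card N * Nat.card (G ⧸ N)
          = Nat.card (G ⧸ N) * Nat.card N := by ring
        _ = Nat.card G := hlag.symm
        _ = Nat.card S * Nat.card (MulAction.stabilizer (ConjAct G) x) := horb.symm
        _ = Nat.card N * (m * Nat.card (MulAction.stabilizer (ConjAct G) x)) := by
            rw [hm]; ring
    have := Nat.eq_of_mul_eq_mul_left hNpos this
    rw [this]; ring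
  obtain ⟨n, hn⟩ := IsPGroup.iff_card.mp hquot
  rw [hn] at hdvd
  obtain ⟨i, -, hi⟩ := (Nat.dvd_prime_pow hp).mp hdvd
  exact IsPGroup.iff_card.mpr ⟨i, hi⟩
end

section
/- Let N be a nontrivial proper normal subgroup of a finite group G. Then (G,N) is a Camina pair if and only if for every x ∈ G∖N, the order of the centralizer C_G(x) equals the order of the centralizer C_{G/N}(xN) of the image of x in G/N. -/
open MulAction Subgroup QuotientGroup

section

variable {G : Type*} [Group G]

theorem nat_card_orbit_conjAct_mul_nat_card_centralizer (x : G) :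
    Nat.card (orbit (ConjAct G) x) * Nat.card (centralizer {x}) = Nat.card G := by
  rw [nat_card_centralizer_nat_card_stabilizer, Nat.card_coe_set_eq, ← index_stabilizer,
    index_mul_card]
  exact Nat.card_congr ConjAct.ofConjAct.toEquiv

theorem orbit_conjAct_subset_preimage {H : Type*} [Group H] (f : G →* H) (x : G) :
    orbit (ConjAct G) x ⊆ f ⁻¹' orbit (ConjAct H) (f x) := fun _ hy => by
  rw [ConjAct.mem_orbit_conjAct] at hy
  rw [Set.mem_preimage, ConjAct.mem_orbit_conjAct]
  exact f.map_isConj hy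

theorem nat_card_preimage_mk (N : Subgroup G) (T : Set (G ⧸ N)) :
    Nat.card ((↑) ⁻¹' T : Set G) = Nat.card N * Nat.card T := by
  rw [Nat.card_congr (preimageMkEquivSubgroupProdSet N T), Nat.card_prod]

theorem preimage_mk_orbit_conjAct_subset_iff (N : Subgroup G) [N.Normal] (x : G) :
    (↑) ⁻¹' orbit (ConjAct (G ⧸ N)) (x : G ⧸ N) ⊆ orbit (ConjAct G) x ↔
      ∀ n ∈ N, IsConj x (x * n) := by
  simp only [Set.subset_def, Set.mem_preimage, ConjAct.mem_orbit_conjAct]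
  constructor
  · intro h n hn
    refine (h (x * n) ?_).symm
    rw [mk_mul, (eq_one_iff n).mpr hn, mul_one]
  · intro h y hy
    obtain ⟨c, hc⟩ := isConj_iff.mp hy
    obtain ⟨g, rfl⟩ := mk_surjective c
    have hmem : x⁻¹ * (g * y * g⁻¹) ∈ N := QuotientGroup.eq.mp (by simpa using hc.symm)
    have hconj : IsConj y (g * y * g⁻¹) := isConj_iff.mpr ⟨g, rfl⟩
    rw [← mul_inv_cancel_left x (g * y * g⁻¹)] at hconj
    exact hconj.trans (h _ hmem).symm

theorem nat_card_orbit_conjAct_mul_nat_card_centralizer_eq_preimage (N : Subgroup G) [N.Normal]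
    (x : G) :
    Nat.card (orbit (ConjAct G) x) * Nat.card (centralizer {x}) =
      Nat.card ((↑) ⁻¹' orbit (ConjAct (G ⧸ N)) (x : G ⧸ N) : Set G) *
        Nat.card (centralizer {(x : G ⧸ N)}) := by
  rw [nat_card_orbit_conjAct_mul_nat_card_centralizer, nat_card_preimage_mk, mul_assoc,
    nat_card_orbit_conjAct_mul_nat_card_centralizer, card_eq_card_quotient_mul_card_subgroup N,
    mul_comm]

theorem forall_isConj_mul_iff_nat_card_centralizer_eq [Finite G] (N : Subgroup G) [N.Normal]
    (x : G) :
    (∀ n ∈ N, IsConj x (x * n)) ↔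
      Nat.card (centralizer {x}) = Nat.card (centralizer {(x : G ⧸ N)}) := by
  have hcount := nat_card_orbit_conjAct_mul_nat_card_centralizer_eq_preimage N x
  set S := orbit (ConjAct G) x
  set P : Set G := (↑) ⁻¹' orbit (ConjAct (G ⧸ N)) (x : G ⧸ N)
  have hSP : S ⊆ P := orbit_conjAct_subset_preimage (QuotientGroup.mk' N) x
  have : Nonempty S := ⟨⟨x, mem_orbit_self x⟩⟩
  have hS : 0 < Nat.card S := Nat.card_pos
  have hC : 0 < Nat.card (centralizer {x}) := Nat.card_pos
  have hSP_iff : P ⊆ S ↔ Nat.card S = Nat.card P := by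
    rw [Nat.card_coe_set_eq, Nat.card_coe_set_eq]
    exact ⟨fun h => congrArg _ (hSP.antisymm h),
      fun h => (Set.eq_of_subset_of_ncard_le hSP h.ge).ge⟩
  rw [← preimage_mk_orbit_conjAct_subset_iff, hSP_iff]
  constructor
  · intro h
    rw [h] at hcount hS
    exact Nat.eq_of_mul_eq_mul_left hS hcount
  · intro h
    rw [h] at hcount hC
    exact Nat.eq_of_mul_eq_mul_right hC hcount

end

theorem camina_iff_centralizer_card {G : Type*} [Group G] [Fintype G]
    (N : Subgroup G) [N.Normal] (hbot : N ≠ ⊥) (htop : N ≠ ⊤) :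
    IsCaminaPair N ↔
      ∀ x ∉ N, Nat.card ↥(Subgroup.centralizer {x}) =
        Nat.card ↥(Subgroup.centralizer {((x : G) : G ⧸ N)}) := by
  simp only [IsCaminaPair, hbot, htop, ne_eq, not_false_eq_true, true_and,
    forall_isConj_mul_iff_nat_card_centralizer_eq]
end

section
/- Let N be a nontrivial proper normal subgroup of a finite group G. Then (G,N) is a Camina pair if and only if every irreducible complex character of G whose kernel does not contain N vanishes on G∖N; that is, for every finite-dimensional irreducible complex representation ρ of G such that ρ(n) is not the identity for some n ∈ N, the character of ρ takes the value 0 at every x ∈ G∖N. -/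
/-!
If `(G, N)` is a Camina pair and `χ` is the character of a simple `V` on which `N` acts
nontrivially, then `P = ∑ n ∈ N, ρ n` commutes with `G`, so it is a scalar by Schur; since
`ρ m P = P` for `m ∈ N`, a nonzero scalar would make `N` act trivially, so `P = 0`. As `χ` is constant on the coset `xN`,
`|N| χ(x) = ∑ n ∈ N, χ(xn) = tr (ρ x P) = 0`.

Conversely, `x` and `xn` have the same value under every simple character (for those trivial on
`N` because `N` lies in the kernel, for the others because both values vanish), and simple
characters separate conjugacy classes: the class sums `z_g = ∑ t, t g t⁻¹` are central in `k[G]`,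
so they act on a simple representation by the scalar `|G| χ(g) / χ(1)`; if the simple characters
agree on `g` and `h`, then `z_g - z_h` annihilates every simple left ideal, hence all of the
semisimple ring `k[G]`, and comparing coefficients of `z_g = z_h` at `h` gives `g ~ h`.
-/

open CategoryTheory Representation MonoidAlgebra

universe u

namespace FDRep

section Schur

variable {k G : Type*} [Field k] [Monoid G]

theorem exists_eq_smul_id_of_commute [IsAlgClosed k] (V : FDRep k G) [Simple V]
    (φ : V →ₗ[k] V) (hφ : ∀ g, φ ∘ₗ V.ρ g = V.ρ g ∘ₗ φ) : ∃ c : k, φ = c • LinearMap.id := by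
  let f : V ⟶ V := ⟨FGModuleCat.ofHom φ, fun g => by ext v; exact LinearMap.congr_fun (hφ g) v⟩
  obtain ⟨c, hc⟩ := endomorphism_simple_eq_smul_id k f
  exact ⟨c, congrArg (fun q : V ⟶ V => q.hom.hom.hom) hc.symm⟩

theorem nontrivial_of_simple (V : FDRep k G) [Simple V] : Nontrivial V := by
  by_contra h
  rw [not_nontrivial_iff_subsingleton] at h
  exact id_nonzero V (by ext v; exact Subsingleton.elim (α := V) _ _)

theorem eq_zero_of_commute_of_trace_eq_zero [IsAlgClosed k] [CharZero k] (V : FDRep k G)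
    [Simple V] (φ : V →ₗ[k] V) (hφ : ∀ g, φ ∘ₗ V.ρ g = V.ρ g ∘ₗ φ)
    (htr : LinearMap.trace k V φ = 0) : φ = 0 := by
  have := nontrivial_of_simple V
  obtain ⟨c, rfl⟩ := exists_eq_smul_id_of_commute V φ hφ
  have hdim : (Module.finrank k V : k) ≠ 0 := Nat.cast_ne_zero.mpr Module.finrank_pos.ne'
  rw [map_smul, LinearMap.trace_id, smul_eq_mul, mul_eq_zero] at htr
  rw [htr.resolve_right hdim, zero_smul]

end Schur

section NormalSubgroup

variable {k G : Type*} [Field k] [Group G]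

theorem sum_ρ_subgroup_eq_zero [IsAlgClosed k] (V : FDRep k G) [Simple V] (N : Subgroup G)
    [N.Normal] [Fintype N] (hN : ∃ n ∈ N, V.ρ n ≠ 1) : ∑ n : N, V.ρ n = 0 := by
  set P := ∑ n : N, V.ρ n
  have hinv : ∀ m : N, V.ρ m * P = P := fun m => by
    simp only [P, Finset.mul_sum, ← map_mul]
    exact Fintype.sum_equiv (Equiv.mulLeft m) _ _ fun n => rfl
  have hcomm : ∀ g, P ∘ₗ V.ρ g = V.ρ g ∘ₗ P := fun g => by
    change P * V.ρ g = V.ρ g * P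
    simp only [P, Finset.mul_sum, Finset.sum_mul, ← map_mul]
    refine (Fintype.sum_equiv (MulAut.conjNormal g : MulAut N).toEquiv _ _ fun n => ?_).symm
    rw [MulEquiv.toEquiv_eq_coe, MulEquiv.coe_toEquiv, MulAut.conjNormal_apply,
      inv_mul_cancel_right]
  obtain ⟨c, hc⟩ := exists_eq_smul_id_of_commute V P hcomm
  obtain ⟨n, hn, hn1⟩ := hN
  suffices c = 0 by rw [hc, this, zero_smul]
  by_contra hc0
  apply hn1
  have := hinv ⟨n, hn⟩
  rw [hc, mul_smul_comm, ← Module.End.one_eq_id, mul_one] at this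
  exact smul_right_injective _ hc0 this

theorem character_eq_zero_of_forall_isConj_mul [IsAlgClosed k] [CharZero k] [Finite G]
    (V : FDRep k G) [Simple V] (N : Subgroup G) [N.Normal] (hN : ∃ n ∈ N, V.ρ n ≠ 1) {x : G}
    (hx : ∀ n ∈ N, IsConj x (x * n)) : V.character x = 0 := by
  have := Fintype.ofFinite N
  have hconst : ∀ n : N, V.character (x * n) = V.character x := fun n => by
    obtain ⟨c, hc⟩ := isConj_iff.mp (hx n n.2)
    rw [← hc, char_conj]
  have hsum : ∑ n : N, V.character (x * n) = LinearMap.trace k V (V.ρ x * ∑ n : N, V.ρ n) := by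
    simp only [Finset.mul_sum, map_sum, ← map_mul]
    rfl
  rw [sum_ρ_subgroup_eq_zero V N hN, mul_zero, map_zero, Fintype.sum_congr _ _ hconst,
    Finset.sum_const, Finset.card_univ, nsmul_eq_mul, mul_eq_zero] at hsum
  exact hsum.resolve_left (Nat.cast_ne_zero.mpr Fintype.card_ne_zero)

end NormalSubgroup

end FDRep

namespace MonoidAlgebra

variable (k : Type*) {G : Type*} [Semiring k] [Group G] [Fintype G]

noncomputable def classSum (g : G) : k[G] := ∑ t : G, single (t * g * t⁻¹) 1

variable {k}

theorem single_one_mul_classSum (s g : G) :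
    single s 1 * classSum k g = classSum k g * single s 1 := by
  simp only [classSum, Finset.mul_sum, Finset.sum_mul, single_mul_single, mul_one]
  refine Fintype.sum_equiv (Equiv.mulLeft s) _ _ fun t => ?_
  simp only [Equiv.coe_mulLeft, mul_inv_rev, mul_assoc, inv_mul_cancel, mul_one]

theorem coeff_classSum [DecidableEq G] (g x : G) :
    (classSum k g).coeff x = (Finset.univ.filter fun t : G => t * g * t⁻¹ = x).card := by
  simp [classSum, coeff_sum, coeff_single, Finsupp.single_apply, Finset.sum_boole]

theorem isConj_of_classSum_eq [CharZero k] {g h : G} (hgh : classSum k g = classSum k h) :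
    IsConj g h := by
  classical
  have hcoeff := congrArg (fun z : k[G] => z.coeff h) hgh
  simp only [coeff_classSum, Nat.cast_inj] at hcoeff
  have hpos : 0 < (Finset.univ.filter fun t : G => t * h * t⁻¹ = h).card :=
    Finset.card_pos.mpr ⟨1, by simp⟩
  obtain ⟨t, ht⟩ := Finset.card_pos.mp (hcoeff ▸ hpos)
  exact isConj_iff.mpr ⟨t, (Finset.mem_filter.mp ht).2⟩

end MonoidAlgebra

namespace Representation

section

variable {k G V : Type*} [CommSemiring k] [Group G] [Fintype G] [AddCommMonoid V] [Module k V]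

theorem asAlgebraHom_classSum (ρ : Representation k G V) (g : G) :
    asAlgebraHom ρ (classSum k g) = ∑ t : G, ρ (t * g * t⁻¹) := by
  simp only [classSum, map_sum, asAlgebraHom_single_one]

end

section

variable {k G M : Type*} [CommSemiring k] [Monoid G] [AddCommMonoid M] [Module k M]
  [Module k[G] M] [IsScalarTower k k[G] M]

theorem asAlgebraHom_ofModule' :
    asAlgebraHom (ofModule' (k := k) (G := G) M) = Algebra.lsmul k k M :=
  (MonoidAlgebra.lift k _ G).apply_symm_apply _

theorem asAlgebraHom_ofModule'_apply (r : k[G]) (m : M) :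
    asAlgebraHom (ofModule' (k := k) (G := G) M) r m = r • m := by
  rw [asAlgebraHom_ofModule']
  rfl

noncomputable def ofModule'AsModuleEquiv :
    (ofModule' (k := k) (G := G) M).asModule ≃ₗ[k[G]] M where
  __ := (ofModule' (k := k) (G := G) M).asModuleEquiv
  map_smul' r m := by
    simp only [AddHom.toFun_eq_coe, LinearMap.coe_toAddHom, LinearEquiv.coe_coe]
    rw [asModuleEquiv_map_smul, asAlgebraHom_ofModule'_apply]
    rfl

end

theorem isIrreducible_ofModule' {k G M : Type*} [Field k] [Monoid G] [AddCommGroup M]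
    [Module k M] [Module k[G] M] [IsScalarTower k k[G] M] [IsSimpleModule k[G] M] :
    IsIrreducible (ofModule' (k := k) (G := G) M) :=
  (irreducible_iff_isSimpleModule_asModule _).mpr (IsSimpleModule.congr ofModule'AsModuleEquiv)

end Representation

theorem FDRep.simple_of_isIrreducible {k G V : Type u} [Field k] [IsAlgClosed k] [Group G]
    [Finite G] [NeZero (Nat.card G : k)] [AddCommGroup V] [Module k V] [Module.Finite k V]
    (ρ : Representation k G V) [IsIrreducible ρ] : Simple (FDRep.of ρ) := by
  rw [FDRep.simple_iff_end_is_rank_one,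
    ((FDRep.forget₂HomLinearEquiv _ _).symm.trans (Rep.homLinearEquiv _ _)).finrank_eq]
  exact IsIrreducible.finrank_intertwiningMap_self ρ

theorem IsSemisimpleModule.annihilator_eq_iInf_simples {R M : Type*} [Ring R] [AddCommGroup M]
    [Module R M] [IsSemisimpleModule R M] :
    Module.annihilator R M =
      ⨅ m : {m : Submodule R M // IsSimpleModule R m}, Module.annihilator R m := by
  rw [← Submodule.annihilator_top, ← sSup_simples_eq_top, sSup_eq_iSup',
    Submodule.annihilator_iSup]
  rfl

theorem FDRep.asAlgebraHom_classSum_eq_of_character_eq {k G : Type*} [Field k] [IsAlgClosed k]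
    [CharZero k] [Group G] [Fintype G] (V : FDRep k G) [Simple V] {g h : G}
    (hχ : V.character g = V.character h) :
    asAlgebraHom V.ρ (classSum k g) = asAlgebraHom V.ρ (classSum k h) := by
  have htrace : ∀ x : G, LinearMap.trace k V (asAlgebraHom V.ρ (classSum k x)) =
      Fintype.card G * V.character x := fun x => by
    rw [asAlgebraHom_classSum, map_sum]
    change ∑ t : G, V.character (t * x * t⁻¹) = _
    simp only [char_conj, Finset.sum_const, Finset.card_univ, nsmul_eq_mul]
  rw [← sub_eq_zero]
  refine eq_zero_of_commute_of_trace_eq_zero V _ (fun s => ?_) ?_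
  · rw [← Module.End.mul_eq_comp, ← Module.End.mul_eq_comp, ← asAlgebraHom_single_one,
      sub_mul, mul_sub, ← map_mul, ← map_mul, ← map_mul, ← map_mul,
      single_one_mul_classSum, single_one_mul_classSum]
  · rw [map_sub, htrace, htrace, hχ, sub_self]

namespace MonoidAlgebra

variable {k G : Type u} [Field k] [IsAlgClosed k] [CharZero k] [Group G] [Fintype G]

theorem sub_classSum_mem_annihilator {g h : G}
    (hχ : ∀ V : FDRep k G, Simple V → V.character g = V.character h)
    (M : Type u) [AddCommGroup M] [Module k M] [Module k[G] M] [IsScalarTower k k[G] M]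
    [Module.Finite k M] [IsSimpleModule k[G] M] :
    classSum k g - classSum k h ∈ Module.annihilator k[G] M := by
  have := isIrreducible_ofModule' (k := k) (G := G) (M := M)
  have hV := FDRep.simple_of_isIrreducible (ofModule' (k := k) (G := G) M)
  have hM := FDRep.asAlgebraHom_classSum_eq_of_character_eq _ (hχ _ hV)
  refine Module.mem_annihilator.mpr fun m => ?_
  rw [sub_smul, sub_eq_zero, ← asAlgebraHom_ofModule'_apply, ← asAlgebraHom_ofModule'_apply]
  exact LinearMap.congr_fun hM m

theorem classSum_eq_of_character_eq {g h : G}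
    (hχ : ∀ V : FDRep k G, Simple V → V.character g = V.character h) :
    classSum k g = classSum k h := by
  have hann : classSum k g - classSum k h ∈ Module.annihilator k[G] k[G] := by
    rw [IsSemisimpleModule.annihilator_eq_iInf_simples, Submodule.mem_iInf]
    rintro ⟨W, hW⟩
    exact sub_classSum_mem_annihilator hχ W
  simpa [sub_eq_zero] using Module.mem_annihilator.mp hann 1

end MonoidAlgebra

theorem camina_iff_characters_vanish (G : Type) [Group G] [Fintype G]
    (N : Subgroup G) [N.Normal] (hbot : N ≠ ⊥) (htop : N ≠ ⊤) :
    IsCaminaPair N ↔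
      ∀ V : FDRep ℂ G, CategoryTheory.Simple V →
        (∃ n ∈ N, V.ρ n ≠ 1) → ∀ x ∉ N, V.character x = 0 := by
  constructor
  · rintro ⟨-, -, hcamina⟩ V hV hN x hx
    exact V.character_eq_zero_of_forall_isConj_mul N hN (hcamina x hx)
  · refine fun hvanish => ⟨hbot, htop, fun x hx n hn => isConj_of_classSum_eq (k := ℂ) ?_⟩
    refine classSum_eq_of_character_eq fun V hV => ?_
    by_cases hN : ∃ m ∈ N, V.ρ m ≠ 1
    · have hxn : x * n ∉ N := mt (N.mul_mem_cancel_right hn).mp hx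
      rw [hvanish V hV hN x hx, hvanish V hV hN _ hxn]
    · push Not at hN
      change LinearMap.trace ℂ V (V.ρ x) = LinearMap.trace ℂ V (V.ρ (x * n))
      rw [map_mul, hN n hn, mul_one]
end

section
/- Let (G,N) be a Camina pair of Type (4), i.e., there is a prime p such that G/N is a p-group, p divides |N|, and N is not a p-group. If K is a normal p-complement of G (a normal subgroup of order coprime to p with G/K a p-group), then K is properly contained in N. -/
theorem camina_type4_pComplement_lt {G : Type*} [Group G] [Fintype G]
    (N : Subgroup G) [N.Normal] (hC : IsCaminaPair N)
    (p : ℕ) (hp : p.Prime) (hquot : IsPGroup p (G ⧸ N))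
    (hdvd : p ∣ Nat.card ↥N) (hNp : ¬ IsPGroup p ↥N)
    -- `K` is a normal `p`-complement of `G`
    (K : Subgroup G) [K.Normal] (hKcop : (Nat.card ↥K).Coprime p)
    (hKquot : IsPGroup p (G ⧸ K)) :
    K < N := by
  have hle : K ≤ N := by
    intro x hx
    have h1 : orderOf (x : G) ∣ Nat.card K := by
      have := orderOf_dvd_natCard (⟨x, hx⟩ : K)
      rwa [← orderOf_submonoid] at this
    obtain ⟨k, hk⟩ := hquot (QuotientGroup.mk x : G ⧸ N)
    have h2 : orderOf (QuotientGroup.mk x : G ⧸ N) ∣ p ^ k :=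
      orderOf_dvd_of_pow_eq_one hk
    have h3 : orderOf (QuotientGroup.mk x : G ⧸ N) ∣ orderOf x :=
      orderOf_map_dvd (QuotientGroup.mk' N) x
    have hcop : (orderOf (QuotientGroup.mk x : G ⧸ N)).Coprime (p ^ k) :=
      Nat.Coprime.pow_right k ((hKcop.coprime_dvd_left (h3.trans h1)))
    have : orderOf (QuotientGroup.mk x : G ⧸ N) = 1 :=
      Nat.eq_one_of_dvd_coprimes hcop dvd_rfl h2
    have : (QuotientGroup.mk x : G ⧸ N) = 1 := orderOf_eq_one_iff.mp this
    rwa [QuotientGroup.eq_one_iff] at this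
  refine lt_of_le_of_ne hle ?_
  rintro rfl
  exact hp.one_lt.ne' (Nat.Coprime.eq_one_of_dvd hKcop.symm hdvd)
end

section
/- Let (G,N) be an equal order pair and suppose x ∈ G∖N satisfies x² = 1. Then x n x⁻¹ = n⁻¹ for every n ∈ N, and consequently N is abelian. -/
/-- `(G, N)` is an equal order pair: `N` is a nontrivial proper (normal) subgroup of `G`
and, for every `x ∈ G \ N`, all elements of the coset `xN` have the same order. -/
def IsEqualOrderPair {G : Type*} [Group G] (N : Subgroup G) : Prop :=
  N ≠ ⊥ ∧ N ≠ ⊤ ∧ ∀ x ∉ N, ∀ n ∈ N, orderOf (x * n) = orderOf x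

theorem eop_involution_inverts {G : Type*} [Group G] [Fintype G]
    (N : Subgroup G) [N.Normal] (hE : IsEqualOrderPair N)
    (x : G) (hx : x ∉ N) (hx2 : x * x = 1) :
    (∀ m ∈ N, x * m * x⁻¹ = m⁻¹) ∧ ∀ a ∈ N, ∀ b ∈ N, a * b = b * a := by
  obtain ⟨-, -, hord⟩ := hE
  have hx2' : x ^ 2 = 1 := by rw [pow_two]; exact hx2
  have hxi : x⁻¹ = x := by
    rw [inv_eq_iff_mul_eq_one]; exact hx2
  have hinv : ∀ m ∈ N, x * m * x⁻¹ = m⁻¹ := by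
    intro m hm
    have hd : orderOf (x * m) ∣ 2 := by
      rw [hord x hx m hm]; exact orderOf_dvd_of_pow_eq_one hx2'
    have h1 : (x * m) ^ 2 = 1 := orderOf_dvd_iff_pow_eq_one.mp hd
    have h2 : (x * m * x) * m = 1 := by
      rw [pow_two] at h1; rw [← h1]; group
    have h3 : x * m * x = m⁻¹ := eq_inv_of_mul_eq_one_left
      (by rw [← h2])
    rw [hxi]; exact h3
  refine ⟨hinv, ?_⟩
  intro a ha b hb
  have hab := hinv (a * b) (N.mul_mem ha hb)
  have ha' := hinv a ha
  have hb' := hinv b hb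
  have key : a⁻¹ * b⁻¹ = b⁻¹ * a⁻¹ := by
    have : (x * a * x⁻¹) * (x * b * x⁻¹) = (a * b)⁻¹ := by
      rw [← hab]; group
    rw [ha', hb', mul_inv_rev] at this
    exact this
  have := congrArg (·⁻¹) key
  simpa [mul_inv_rev] using this.symm
end
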